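/- arXiv:1304.2199 — 2 statements merged into one kernel-verified Lean document; each statement's English description precedes it below -/
import Mathlib

section
/- Let u_i, r_i, R_i, a_i be positive reals with r_i < R_i, and suppose for each subset J ⊆ {1,…,N} a complex matrix M_J indexed by J satisfies the Hadamard bound |det M_J| ≤ ∏_{i∈J} (Σ_{j∈J} (r_i u_j a_j / (u_i (R_i − r_i)))²)^{1/2}. Then Σ_{J⊆{1,…,N}} |det M_J| ≤ exp( Σ_{i=1}^N r_i/(u_i(R_i−r_i)) · (Σ_{j=1}^N u_j² a_j²)^{1/2} ). -/
open Finset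

lemma Real.sqrt_sum_mul_sq_le {ι : Type*} {J s : Finset ι} (hJ : J ⊆ s) {d : ℝ} (hd : 0 ≤ d)
    (x : ι → ℝ) : √(∑ j ∈ J, (d * x j) ^ 2) ≤ d * √(∑ j ∈ s, x j ^ 2) := by
  simp_rw [mul_pow, ← mul_sum]
  rw [Real.sqrt_mul (sq_nonneg d), Real.sqrt_sq hd]
  gcongr

lemma Real.sum_finset_prod_le_exp_sum {ι : Type*} [Fintype ι] {c : ι → ℝ} (hc : ∀ i, 0 ≤ c i) :
    ∑ J : Finset ι, ∏ i ∈ J, c i ≤ Real.exp (∑ i, c i) := by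
  simpa only [prod_one_add, powerset_univ] using Real.prod_one_add_le_exp_sum univ hc

theorem sum_hadamard_bounds_le_exp_general {N : ℕ} (u r R a : Fin N → ℝ)
    (hu : ∀ i, 0 < u i) (hr : ∀ i, 0 < r i)
    (hrR : ∀ i, r i < R i)
    (M : (J : Finset (Fin N)) → Matrix J J ℂ)
    (hM : ∀ J : Finset (Fin N),
      ‖(M J).det‖
        ≤ ∏ i ∈ J, Real.sqrt (∑ j ∈ J,
            (r i * u j * a j / (u i * (R i - r i))) ^ 2)) :
    ∑ J : Finset (Fin N), ‖(M J).det‖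
      ≤ Real.exp (∑ i, r i / (u i * (R i - r i))
          * Real.sqrt (∑ j, (u j) ^ 2 * (a j) ^ 2)) := by
  set d : Fin N → ℝ := fun i => r i / (u i * (R i - r i))
  have hd (i : Fin N) : 0 ≤ d i := (div_pos (hr i) (mul_pos (hu i) (sub_pos.2 (hrR i)))).le
  have hrow (J : Finset (Fin N)) (i : Fin N) (_ : i ∈ J) :
      √(∑ j ∈ J, (r i * u j * a j / (u i * (R i - r i))) ^ 2)
        ≤ d i * √(∑ j, u j ^ 2 * a j ^ 2) := by
    convert Real.sqrt_sum_mul_sq_le (subset_univ J) (hd i) (fun j => u j * a j) using 4 with j _ j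
    · ring
    · ring
  calc ∑ J, ‖(M J).det‖
      ≤ ∑ J : Finset (Fin N), ∏ i ∈ J, d i * √(∑ j, u j ^ 2 * a j ^ 2) :=
        sum_le_sum fun J _ => (hM J).trans (prod_le_prod (fun _ _ => Real.sqrt_nonneg _) (hrow J))
    _ ≤ _ := Real.sum_finset_prod_le_exp_sum fun i => mul_nonneg (hd i) (Real.sqrt_nonneg _)

/-- Chain of estimates of Lemma 3.2: summing Hadamard bounds over all subsets
J of {1,…,N} yields the exponential bound. -/
theorem sum_hadamard_bounds_le_exp {N : ℕ} (u r R a : Fin N → ℝ)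
    (hu : ∀ i, 0 < u i) (hr : ∀ i, 0 < r i) (ha : ∀ i, 0 < a i)
    (hrR : ∀ i, r i < R i)
    (M : (J : Finset (Fin N)) → Matrix J J ℂ)
    (hM : ∀ J : Finset (Fin N),
      ‖(M J).det‖
        ≤ ∏ i ∈ J, Real.sqrt (∑ j ∈ J,
            (r i * u j * a j / (u i * (R i - r i))) ^ 2)) :
    ∑ J : Finset (Fin N), ‖(M J).det‖
      ≤ Real.exp (∑ i, r i / (u i * (R i - r i))
          * Real.sqrt (∑ j, (u j) ^ 2 * (a j) ^ 2)) :=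
  sum_hadamard_bounds_le_exp_general u r R a hu hr hrR M hM
end

section
/- (Formal inversion) Let (F_k(w))_{k∈ℕ} be a family of formal power series in countably many variables (w_j) with F_k(0) ≠ 0 for all k. Then there exists a unique family of formal power series (G_k(u))_{k∈ℕ} such that setting w_k(u) = u_k G_k(u), one has w_k(u) F_k(w(u)) = u_k as formal power series for all k. -/
open scoped BigOperators

/-- Substitution of the family of power series `w` (each with zero constant
term) into the power series `F`: the coefficient of a monomial `d` in
`F(w)` is the (finitely supported) sum over monomials `m` of the coefficient
of `m` in `F` times the coefficient of `d` in `∏_j w_j^{m_j}`. -/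
noncomputable def substSeries (w : ℕ → MvPowerSeries ℕ ℂ)
    (F : MvPowerSeries ℕ ℂ) : MvPowerSeries ℕ ℂ :=
  fun d => ∑ᶠ m : ℕ →₀ ℕ,
    MvPowerSeries.coeff m F *
      MvPowerSeries.coeff d (∏ j ∈ m.support, (w j) ^ m j)

/-!
The equation `u_k G_k(u) F_k(w(u)) = u_k` is equivalent to the fixed-point equation
`G_k = F_k(w(u))⁻¹`. Since `w_j = u_j G_j` carries the extra factor `u_j`, the coefficients of
degree `< n` of `G` determine those of degree `≤ n` of `F_k(w(u))`, hence of its inverse: the map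
`G ↦ (F_k(w(u))⁻¹)_k` is a contraction for the `u`-adic filtration by total degree, and so has a
unique fixed point, obtained as the coefficientwise limit of its iterates starting from `0`.
-/

open MvPowerSeries Function

namespace MvPowerSeries

variable {σ R : Type*} [CommRing R]

variable (σ R) in
noncomputable def orderIdeal (n : ℕ) : Ideal (MvPowerSeries σ R) where
  carrier := {φ | (n : ℕ∞) ≤ φ.order}
  zero_mem' := by simp
  add_mem' {φ ψ} hφ hψ := (le_min hφ hψ).trans min_order_le_add
  smul_mem' c φ hφ := hφ.trans <| le_add_self.trans le_order_mul

theorem orderIdeal_zero : orderIdeal σ R 0 = ⊤ :=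
  eq_top_iff.mpr fun φ _ => show ((0 : ℕ) : ℕ∞) ≤ φ.order from bot_le

theorem orderIdeal_antitone : Antitone (orderIdeal σ R) :=
  fun _ _ hmn φ hφ => show _ ≤ φ.order from (Nat.cast_le.mpr hmn).trans hφ

theorem coeff_eq_of_smodEq {n : ℕ} {φ ψ : MvPowerSeries σ R}
    (h : φ ≡ ψ [SMOD orderIdeal σ R n]) {d : σ →₀ ℕ} (hd : d.degree < n) :
    coeff d φ = coeff d ψ :=
  sub_eq_zero.mp <| by
    rw [← map_sub]
    exact coeff_of_lt_order <| (Nat.cast_lt.mpr hd).trans_le (SModEq.sub_mem.mp h)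

theorem smodEq_of_coeff_eq {n : ℕ} {φ ψ : MvPowerSeries σ R}
    (h : ∀ d : σ →₀ ℕ, d.degree < n → coeff d φ = coeff d ψ) :
    φ ≡ ψ [SMOD orderIdeal σ R n] :=
  SModEq.sub_mem.mpr <| nat_le_order fun d hd => by rw [map_sub, h d hd, sub_self]

theorem eq_of_forall_smodEq {φ ψ : MvPowerSeries σ R}
    (h : ∀ n, φ ≡ ψ [SMOD orderIdeal σ R n]) : φ = ψ :=
  ext fun d => coeff_eq_of_smodEq (h (d.degree + 1)) d.degree.lt_succ_self

theorem X_mul_smodEq {n : ℕ} {φ ψ : MvPowerSeries σ R} (h : φ ≡ ψ [SMOD orderIdeal σ R n])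
    (j : σ) : X j * φ ≡ X j * ψ [SMOD orderIdeal σ R (n + 1)] := by
  have hX : 1 ≤ (X j : MvPowerSeries σ R).order :=
    one_le_order_iff_constCoeff_eq_zero.mpr (constantCoeff_X j)
  rw [SModEq.sub_mem, ← mul_sub, add_comm]
  exact (add_le_add hX (SModEq.sub_mem.mp h)).trans le_order_mul

theorem inv_smodEq_inv {k : Type*} [Field k] {I : Ideal (MvPowerSeries σ k)}
    {φ ψ : MvPowerSeries σ k} (hφ : constantCoeff φ ≠ 0) (hψ : constantCoeff ψ ≠ 0)
    (h : φ ≡ ψ [SMOD I]) : φ⁻¹ ≡ ψ⁻¹ [SMOD I] := by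
  have key : φ⁻¹ - ψ⁻¹ = φ⁻¹ * ψ⁻¹ * (ψ - φ) := by
    linear_combination ψ⁻¹ * MvPowerSeries.inv_mul_cancel φ hφ -
      φ⁻¹ * MvPowerSeries.inv_mul_cancel ψ hψ
  rw [SModEq.sub_mem, key]
  exact I.mul_mem_left _ (SModEq.sub_mem.mp h.symm)

theorem X_ne_zero [Nontrivial R] (j : σ) : (X j : MvPowerSeries σ R) ≠ 0 := fun h => by
  simpa using congr_arg (coeff (Finsupp.single j 1)) h

theorem X_mul_mul_eq_X_iff {k : Type*} [Field k] {g S : MvPowerSeries σ k}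
    (hS : constantCoeff S ≠ 0) (j : σ) : X j * g * S = X j ↔ g = S⁻¹ := by
  rw [MvPowerSeries.eq_inv_iff_mul_eq_one hS, mul_assoc, mul_eq_left₀ (X_ne_zero j)]

variable {ι : Type*}

def IsContracting (Φ : (ι → MvPowerSeries σ R) → ι → MvPowerSeries σ R) : Prop :=
  ∀ n G G', (∀ i, G i ≡ G' i [SMOD orderIdeal σ R n]) →
    ∀ i, Φ G i ≡ Φ G' i [SMOD orderIdeal σ R (n + 1)]

namespace IsContracting

variable {Φ : (ι → MvPowerSeries σ R) → ι → MvPowerSeries σ R} (hΦ : IsContracting Φ)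
include hΦ

theorem eq_of_isFixedPt {G G' : ι → MvPowerSeries σ R} (hG : IsFixedPt Φ G)
    (hG' : IsFixedPt Φ G') : G = G' := by
  have key : ∀ n i, G i ≡ G' i [SMOD orderIdeal σ R n] := by
    intro n
    induction n with
    | zero => simp [orderIdeal_zero, SModEq.top]
    | succ n ih => simpa only [hG.eq, hG'.eq] using hΦ n G G' ih
  exact funext fun i => eq_of_forall_smodEq fun n => key n i

theorem iterate_smodEq_iterate_succ (n : ℕ) (i : ι) :
    Φ^[n] 0 i ≡ Φ^[n + 1] 0 i [SMOD orderIdeal σ R n] := by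
  induction n generalizing i with
  | zero => simp [orderIdeal_zero, SModEq.top]
  | succ n ih =>
    rw [iterate_succ_apply', iterate_succ_apply' Φ (n + 1)]
    exact hΦ n _ _ ih i

theorem iterate_smodEq_of_le {m n : ℕ} (hmn : m ≤ n) (i : ι) :
    Φ^[m] 0 i ≡ Φ^[n] 0 i [SMOD orderIdeal σ R m] := by
  induction n, hmn using Nat.le_induction with
  | base => rfl
  | succ n hmn ih =>
    exact ih.trans ((hΦ.iterate_smodEq_iterate_succ n i).mono (orderIdeal_antitone hmn))

theorem exists_isFixedPt : ∃ G, IsFixedPt Φ G := by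
  -- the coefficient of degree `d` of the iterates is constant from the `(d + 1)`-st one on
  let G : ι → MvPowerSeries σ R := fun i d => coeff d (Φ^[d.degree + 1] 0 i)
  have hG : ∀ n i, G i ≡ Φ^[n] 0 i [SMOD orderIdeal σ R n] := fun n i =>
    smodEq_of_coeff_eq fun d hd =>
      coeff_eq_of_smodEq (hΦ.iterate_smodEq_of_le hd i) d.degree.lt_succ_self
  refine ⟨G, funext fun i => eq_of_forall_smodEq fun n => ?_⟩
  calc Φ G i ≡ Φ (Φ^[n] 0) i [SMOD orderIdeal σ R n] :=
        (hΦ n _ _ (hG n) i).mono (orderIdeal_antitone n.le_succ)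
    _ = Φ^[n + 1] 0 i := by rw [iterate_succ_apply']
    _ ≡ Φ^[n] 0 i [SMOD orderIdeal σ R n] := (hΦ.iterate_smodEq_iterate_succ n i).symm
    _ ≡ G i [SMOD orderIdeal σ R n] := (hG n i).symm

theorem existsUnique_isFixedPt : ∃! G, IsFixedPt Φ G :=
  let ⟨G, hG⟩ := hΦ.exists_isFixedPt
  ⟨G, hG, fun _ hG' => hΦ.eq_of_isFixedPt hG' hG⟩

end IsContracting

end MvPowerSeries

theorem coeff_substSeries (w : ℕ → MvPowerSeries ℕ ℂ) (F : MvPowerSeries ℕ ℂ) (d : ℕ →₀ ℕ) :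
    coeff d (substSeries w F) = ∑ᶠ m : ℕ →₀ ℕ, coeff m F * coeff d (∏ j ∈ m.support, w j ^ m j) :=
  rfl

theorem substSeries_smodEq {n : ℕ} {w w' : ℕ → MvPowerSeries ℕ ℂ}
    (h : ∀ j, w j ≡ w' j [SMOD orderIdeal ℕ ℂ n]) (F : MvPowerSeries ℕ ℂ) :
    substSeries w F ≡ substSeries w' F [SMOD orderIdeal ℕ ℂ n] := by
  refine smodEq_of_coeff_eq fun d hd => ?_
  rw [coeff_substSeries, coeff_substSeries]
  refine finsum_congr fun m => ?_
  have hp : (∏ j ∈ m.support, w j ^ m j) ≡ ∏ j ∈ m.support, w' j ^ m j [SMOD orderIdeal ℕ ℂ n] :=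
    SModEq.prod fun j _ => (h j).pow (m j)
  rw [coeff_eq_of_smodEq hp hd]

theorem constantCoeff_substSeries {w : ℕ → MvPowerSeries ℕ ℂ}
    (hw : ∀ j, constantCoeff (w j) = 0) (F : MvPowerSeries ℕ ℂ) :
    constantCoeff (substSeries w F) = constantCoeff F := by
  have hprod (m : ℕ →₀ ℕ) (hm : m ≠ 0) : constantCoeff (∏ j ∈ m.support, w j ^ m j) = 0 := by
    obtain ⟨j, hj⟩ := Finsupp.support_nonempty_iff.mpr hm
    simp [Finset.prod_eq_zero hj, hw j, Finsupp.mem_support_iff.mp hj]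
  rw [← coeff_zero_eq_constantCoeff_apply, ← coeff_zero_eq_constantCoeff_apply]
  refine (finsum_eq_single _ 0 fun m hm => ?_).trans (by simp)
  rw [coeff_zero_eq_constantCoeff_apply, hprod m hm, mul_zero]

/-- Formal inversion: given formal power series F_k in countably many
variables with F_k(0) ≠ 0, there is a unique family of formal power series
G_k such that, setting w_k(u) = u_k G_k(u), one has w_k(u) F_k(w(u)) = u_k
for all k. -/
theorem formal_lagrange_inversion (F : ℕ → MvPowerSeries ℕ ℂ)
    (hF : ∀ k, MvPowerSeries.constantCoeff (F k) ≠ 0) :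
    ∃! G : ℕ → MvPowerSeries ℕ ℂ, ∀ k,
      (MvPowerSeries.X k * G k) *
          substSeries (fun j => MvPowerSeries.X j * G j) (F k)
        = MvPowerSeries.X k := by
  set S : (ℕ → MvPowerSeries ℕ ℂ) → ℕ → MvPowerSeries ℕ ℂ :=
    fun G k => substSeries (fun j => X j * G j) (F k)
  have hS (G : ℕ → MvPowerSeries ℕ ℂ) (k : ℕ) : constantCoeff (S G k) ≠ 0 := by
    rw [constantCoeff_substSeries (by simp)]
    exact hF k
  have hcontr : IsContracting fun G k => (S G k)⁻¹ := fun _ G G' h k =>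
    inv_smodEq_inv (hS G k) (hS G' k) (substSeries_smodEq (fun j => X_mul_smodEq (h j) j) _)
  refine (existsUnique_congr fun G => ?_).mpr hcontr.existsUnique_isFixedPt
  rw [IsFixedPt, funext_iff]
  exact forall_congr' fun k => (X_mul_mul_eq_X_iff (hS G k) k).trans eq_comm
end
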